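/- arXiv:2410.11599 — 6 statements merged into one kernel-verified Lean document; each statement's English description precedes it below -/
import Mathlib

section
/- Let m ≥ 2, let v ∈ ℤ^m, let 1 ≤ i ≤ m−1, and let w = v·σ_i. Then Δ(w) = Δ(v), d(w) = d(v), and M(w)_{2d(w)} = M(v)_{2d(v)}. Consequently, if v ∼ w (Hurwitz equivalence) then Δ(v) = Δ(w), d(v) = d(w), and M(v)_{2d(v)} = M(w)_{2d(w)}. -/
/-- Alternating sum `Δ(v) = Σ (-1)^i * v i` (0-indexed; `(-1)^(i-1) a_i` in 1-indexed terms). -/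
def Delta {m : ℕ} (v : Fin m → ℤ) : ℤ :=
  ∑ i : Fin m, (-1 : ℤ) ^ (i : ℕ) * v i

/-- `d(v)`: the (nonnegative) gcd of all pairwise differences of the entries of `v`;
for nonempty `v` this equals `gcd {v i - v 0 : i}`. -/
def dgcd {m : ℕ} (v : Fin m → ℤ) : ℤ :=
  Finset.univ.gcd (fun p : Fin m × Fin m => v p.1 - v p.2)

/-- `M(v)_N`: the multiset of residues of the entries of `v` modulo `N`
(for `N = 0` this is the multiset of the entries themselves). -/
def resM {m : ℕ} (v : Fin m → ℤ) (N : ℤ) : Multiset ℤ :=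
  (Finset.univ.val : Multiset (Fin m)).map (fun i => v i % N)

/-- The Hurwitz move `v·σ_i` (0-indexed `i`). -/
def sigmaAct {m : ℕ} (i : Fin (m - 1)) (v : Fin m → ℤ) : Fin m → ℤ :=
  have h : (i : ℕ) < m - 1 := i.isLt
  fun j =>
    if (j : ℕ) = (i : ℕ) then v ⟨(i : ℕ) + 1, by omega⟩
    else if (j : ℕ) = (i : ℕ) + 1 then
      2 * v ⟨(i : ℕ) + 1, by omega⟩ - v ⟨(i : ℕ), by omega⟩
    else v j

/-- The inverse Hurwitz move `v·σ_i⁻¹` (0-indexed `i`). -/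
def sigmaInvAct {m : ℕ} (i : Fin (m - 1)) (v : Fin m → ℤ) : Fin m → ℤ :=
  have h : (i : ℕ) < m - 1 := i.isLt
  fun j =>
    if (j : ℕ) = (i : ℕ) then 2 * v ⟨(i : ℕ), by omega⟩ - v ⟨(i : ℕ) + 1, by omega⟩
    else if (j : ℕ) = (i : ℕ) + 1 then v ⟨(i : ℕ), by omega⟩
    else v j

/-- The virtual move `v·τ_i`: swap the `i`-th and `(i+1)`-st entries (0-indexed `i`). -/
def tauAct {m : ℕ} (i : Fin (m - 1)) (v : Fin m → ℤ) : Fin m → ℤ :=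
  have h : (i : ℕ) < m - 1 := i.isLt
  fun j =>
    if (j : ℕ) = (i : ℕ) then v ⟨(i : ℕ) + 1, by omega⟩
    else if (j : ℕ) = (i : ℕ) + 1 then v ⟨(i : ℕ), by omega⟩
    else v j

/-- Hurwitz equivalence: the equivalence relation on `ℤ^m` generated by `v ∼ v·σ_i`. -/
def HurwitzEquiv {m : ℕ} : (Fin m → ℤ) → (Fin m → ℤ) → Prop :=
  Relation.EqvGen (fun v w => ∃ i : Fin (m - 1), w = sigmaAct i v)

/-- A letter of a braid word: an index `i` and a sign (`true` = `σ_i`, `false` = `σ_i⁻¹`). -/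
abbrev BraidLetter (m : ℕ) := Fin (m - 1) × Bool

/-- Action of a single braid letter. -/
def braidLetterAct {m : ℕ} (l : BraidLetter m) (v : Fin m → ℤ) : Fin m → ℤ :=
  if l.2 then sigmaAct l.1 v else sigmaInvAct l.1 v

/-- Action `v·β` of a braid word (letters applied in order). -/
def braidWordAct {m : ℕ} (β : List (BraidLetter m)) (v : Fin m → ℤ) : Fin m → ℤ :=
  β.foldl (fun w l => braidLetterAct l w) v

/-- The transposition `(i, i+1)` of `Fin m` associated to the index `i`. -/
def letterPerm {m : ℕ} (i : Fin (m - 1)) : Equiv.Perm (Fin m) :=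
  have h : (i : ℕ) < m - 1 := i.isLt
  Equiv.swap ⟨(i : ℕ), by omega⟩ ⟨(i : ℕ) + 1, by omega⟩

/-- The underlying permutation `π_β` of a braid word: the product, composed in
the same order as the letters are applied, of the transpositions `(i, i+1)`. -/
def braidWordPerm {m : ℕ} (β : List (BraidLetter m)) : Equiv.Perm (Fin m) :=
  β.foldl (fun p l => letterPerm l.1 * p) 1

/-- Pure-braid Hurwitz equivalence: related by a braid word with trivial
underlying permutation. -/
def PureEquiv {m : ℕ} (v w : Fin m → ℤ) : Prop :=
  ∃ β : List (BraidLetter m), braidWordAct β v = w ∧ braidWordPerm β = 1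

/-- A letter of a virtual braid word: `(i, none)` = `τ_i`, `(i, some true)` = `σ_i`,
`(i, some false)` = `σ_i⁻¹`. -/
abbrev VBraidLetter (m : ℕ) := Fin (m - 1) × Option Bool

/-- Action of a single virtual braid letter. -/
def vletterAct {m : ℕ} (l : VBraidLetter m) (v : Fin m → ℤ) : Fin m → ℤ :=
  match l.2 with
  | none => tauAct l.1 v
  | some true => sigmaAct l.1 v
  | some false => sigmaInvAct l.1 v

/-- Action `v·β` of a virtual braid word (letters applied in order). -/
def vwordAct {m : ℕ} (β : List (VBraidLetter m)) (v : Fin m → ℤ) : Fin m → ℤ :=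
  β.foldl (fun w l => vletterAct l w) v

/-- The underlying permutation `π_β` of a virtual braid word. -/
def vwordPerm {m : ℕ} (β : List (VBraidLetter m)) : Equiv.Perm (Fin m) :=
  β.foldl (fun p l => letterPerm l.1 * p) 1

/-- Virtual braid equivalence: `w = v·β` for some virtual braid word `β`. -/
def VirtualEquiv {m : ℕ} (v w : Fin m → ℤ) : Prop :=
  ∃ β : List (VBraidLetter m), vwordAct β v = w

/-- Virtual-pure-braid equivalence: related by a virtual braid word with trivial
underlying permutation. -/
def VPureEquiv {m : ℕ} (v w : Fin m → ℤ) : Prop :=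
  ∃ β : List (VBraidLetter m), vwordAct β v = w ∧ vwordPerm β = 1

/-! A Hurwitz move `σ_i` replaces the adjacent entries `(a, b)` by `(b, 2b - a)`, i.e. it adds
`b - a` to both. These two positions carry opposite signs in `Δ`, so `Δ` is unchanged. Since
`b - a` is a difference of entries of both `v` and `v·σ_i`, each of `d(v)`, `d(v·σ_i)` divides
every difference of the other vector. Finally `2b - a ≡ a` modulo `2(b - a)`, hence modulo `2d`,
so modulo `2d` the move just swaps two entries. Quantities invariant under the generating move
are invariant under Hurwitz equivalence. -/

namespace Hurwitz

variable {m : ℕ}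

lemma dgcd_nonneg (v : Fin m → ℤ) : 0 ≤ dgcd v := by
  rw [dgcd, ← Finset.normalize_gcd, ← Int.abs_eq_normalize]
  exact abs_nonneg _

lemma dgcd_dvd_sub (v : Fin m → ℤ) (a b : Fin m) : dgcd v ∣ v a - v b :=
  Finset.gcd_dvd (Finset.mem_univ (a, b))

lemma dgcd_dvd_dgcd_of_dvd_sub {v w : Fin m → ℤ} (h : ∀ j, dgcd v ∣ w j - v j) :
    dgcd v ∣ dgcd w := by
  refine Finset.dvd_gcd fun p _ => ?_
  have hsplit : w p.1 - w p.2 = (w p.1 - v p.1) + (v p.1 - v p.2) - (w p.2 - v p.2) := by ring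
  rw [hsplit]
  exact ((h p.1).add (dgcd_dvd_sub v p.1 p.2)).sub (h p.2)

lemma resM_comp_perm (v : Fin m → ℤ) (π : Equiv.Perm (Fin m)) (N : ℤ) :
    resM (v ∘ π) N = resM v N := by
  conv_rhs => rw [resM, ← Multiset.map_univ_val_equiv π, Multiset.map_map]
  rfl

lemma resM_congr {v w : Fin m → ℤ} {N : ℤ} (h : ∀ j, v j ≡ w j [ZMOD N]) :
    resM v N = resM w N :=
  Multiset.map_congr rfl fun j _ => h j

def leftPos (i : Fin (m - 1)) : Fin m := ⟨i, by omega⟩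

def rightPos (i : Fin (m - 1)) : Fin m := ⟨i + 1, by omega⟩

lemma letterPerm_eq_swap (i : Fin (m - 1)) : letterPerm i = Equiv.swap (leftPos i) (rightPos i) :=
  rfl

variable (i : Fin (m - 1)) (v : Fin m → ℤ)

lemma sigmaAct_apply_leftPos : sigmaAct i v (leftPos i) = v (rightPos i) := by
  simp [sigmaAct, leftPos, rightPos]

lemma sigmaAct_apply_rightPos :
    sigmaAct i v (rightPos i) = 2 * v (rightPos i) - v (leftPos i) := by
  simp [sigmaAct, leftPos, rightPos]

lemma sigmaAct_apply_of_ne {j : Fin m} (hl : j ≠ leftPos i) (hr : j ≠ rightPos i) :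
    sigmaAct i v j = v j := by
  simp only [ne_eq, Fin.ext_iff, leftPos, rightPos] at hl hr
  simp [sigmaAct, hl, hr]

lemma sigmaAct_sub_self (j : Fin m) :
    sigmaAct i v j - v j =
      if j = leftPos i ∨ j = rightPos i then v (rightPos i) - v (leftPos i) else 0 := by
  by_cases hl : j = leftPos i
  · subst hl; simp [sigmaAct_apply_leftPos]
  by_cases hr : j = rightPos i
  · subst hr; simp [sigmaAct_apply_rightPos]; ring
  simp [hl, hr, sigmaAct_apply_of_ne i v hl hr]

lemma sigmaAct_sub_sigmaAct :
    sigmaAct i v (rightPos i) - sigmaAct i v (leftPos i) = v (rightPos i) - v (leftPos i) := by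
  rw [sigmaAct_apply_leftPos, sigmaAct_apply_rightPos]; ring

lemma sigmaAct_modEq_comp_letterPerm (j : Fin m) :
    sigmaAct i v j ≡ v (letterPerm i j) [ZMOD 2 * (v (rightPos i) - v (leftPos i))] := by
  rw [letterPerm_eq_swap]
  by_cases hl : j = leftPos i
  · subst hl; rw [sigmaAct_apply_leftPos, Equiv.swap_apply_left]
  by_cases hr : j = rightPos i
  · subst hr
    rw [sigmaAct_apply_rightPos, Equiv.swap_apply_right, Int.modEq_iff_dvd]
    exact ⟨-1, by ring⟩
  rw [sigmaAct_apply_of_ne i v hl hr, Equiv.swap_apply_of_ne_of_ne hl hr]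

lemma delta_sigmaAct : Delta (sigmaAct i v) = Delta v := by
  rw [← sub_eq_zero, Delta, Delta, ← Finset.sum_sub_distrib]
  simp_rw [← mul_sub, sigmaAct_sub_self, mul_ite, mul_zero]
  rw [Finset.sum_ite, Finset.sum_const_zero, add_zero, Finset.filter_or, Finset.filter_eq',
    Finset.filter_eq', if_pos (Finset.mem_univ _), if_pos (Finset.mem_univ _),
    Finset.union_comm, Finset.sum_union (by simp [leftPos, rightPos])]
  simp [leftPos, rightPos, pow_succ]

lemma dgcd_sigmaAct : dgcd (sigmaAct i v) = dgcd v := by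
  have hstep : ∀ j, v (rightPos i) - v (leftPos i) ∣ sigmaAct i v j - v j := by
    intro j; rw [sigmaAct_sub_self]; split_ifs <;> simp
  refine Int.dvd_antisymm (dgcd_nonneg _) (dgcd_nonneg _) ?_ ?_
  · refine dgcd_dvd_dgcd_of_dvd_sub fun j => dvd_sub_comm.mp ?_
    rw [← sigmaAct_sub_sigmaAct] at hstep
    exact (dgcd_dvd_sub _ _ _).trans (hstep j)
  · exact dgcd_dvd_dgcd_of_dvd_sub fun j => (dgcd_dvd_sub v _ _).trans (hstep j)

lemma resM_sigmaAct :
    resM (sigmaAct i v) (2 * dgcd (sigmaAct i v)) = resM v (2 * dgcd v) := by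
  rw [dgcd_sigmaAct, ← resM_comp_perm v (letterPerm i)]
  exact resM_congr fun j => (sigmaAct_modEq_comp_letterPerm i v j).of_dvd
    (mul_dvd_mul_left 2 (dgcd_dvd_sub v _ _))

end Hurwitz

open Hurwitz in
theorem stmt_1_general (m : ℕ) :
    (∀ (v : Fin m → ℤ) (i : Fin (m - 1)),
      Delta (sigmaAct i v) = Delta v ∧
      dgcd (sigmaAct i v) = dgcd v ∧
      resM (sigmaAct i v) (2 * dgcd (sigmaAct i v)) = resM v (2 * dgcd v)) ∧
    (∀ v w : Fin m → ℤ, HurwitzEquiv v w →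
      Delta v = Delta w ∧ dgcd v = dgcd w ∧
      resM v (2 * dgcd v) = resM w (2 * dgcd w)) := by
  let invariants (v : Fin m → ℤ) := (Delta v, dgcd v, resM v (2 * dgcd v))
  have hmove : ∀ v i, invariants (sigmaAct i v) = invariants v := fun v i => by
    dsimp only [invariants]
    rw [delta_sigmaAct, resM_sigmaAct, dgcd_sigmaAct]
  refine ⟨fun v i => by simpa [invariants] using hmove v i, fun v w hvw => ?_⟩
  have : invariants v = invariants w :=
    Setoid.eqvGen_le (s := Setoid.ker invariants)
      (fun x y ⟨i, hy⟩ => hy ▸ (hmove x i).symm) hvw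
  simpa [invariants] using this

/-- a single Hurwitz move `σ_i` preserves `Δ`, `d`, and `M(·)_{2d}`;
consequently so does Hurwitz equivalence. -/
theorem stmt_1 (m : ℕ) (hm : 2 ≤ m) :
    (∀ (v : Fin m → ℤ) (i : Fin (m - 1)),
      Delta (sigmaAct i v) = Delta v ∧
      dgcd (sigmaAct i v) = dgcd v ∧
      resM (sigmaAct i v) (2 * dgcd (sigmaAct i v)) = resM v (2 * dgcd v)) ∧
    (∀ v w : Fin m → ℤ, HurwitzEquiv v w →
      Delta v = Delta w ∧ dgcd v = dgcd w ∧
      resM v (2 * dgcd v) = resM w (2 * dgcd w)) :=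
  stmt_1_general m
end

section
/- Let m ≥ 2 and let v = (a_1,…,a_m), w = (b_1,…,b_m) ∈ ℤ^m satisfy w = v·β for some braid word β on m strands. Then b_{π_β(k)} ≡ a_k (mod 2d(v)) for every k = 1,…,m. (Congruence mod 0 means equality in ℤ.) -/
/-! A letter `σ_i^{±1}` sends the entry at position `k` to position `π(k)` and changes it by
zero or by twice a difference of entries; in particular it preserves every common divisor `d` of
the differences. Inducting over the word, each entry moves along `π_β` and only ever changes by
multiples of `2d`. -/

theorem dgcd_dvd_sub {m : ℕ} (v : Fin m → ℤ) (a b : Fin m) : dgcd v ∣ v a - v b :=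
  Finset.gcd_dvd (Finset.mem_univ (a, b))

theorem exists_braidLetterAct_letterPerm_eq {m : ℕ} (l : BraidLetter m) (v : Fin m → ℤ)
    (k : Fin m) : ∃ x y, braidLetterAct l v (letterPerm l.1 k) = v k + 2 * (v x - v y) := by
  obtain ⟨⟨i, hi⟩, sign⟩ := l
  have hi' : i < m - 1 := hi
  set a : Fin m := ⟨i, by omega⟩
  set b : Fin m := ⟨i + 1, by omega⟩
  have hperm : letterPerm ⟨i, hi⟩ = Equiv.swap a b := rfl
  by_cases hka : k = a
  · subst hka
    cases sign
    · exact ⟨b, b, by simp [braidLetterAct, sigmaInvAct, hperm, a, b]⟩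
    · refine ⟨b, a, ?_⟩
      simp only [braidLetterAct, ↓reduceIte, sigmaAct, hperm, Equiv.swap_apply_left,
        Nat.add_eq_left, one_ne_zero, a, b]
      ring
  by_cases hkb : k = b
  · subst hkb
    cases sign
    · refine ⟨a, b, ?_⟩
      simp only [braidLetterAct, Bool.false_eq_true, ↓reduceIte, sigmaInvAct, hperm,
        Equiv.swap_apply_right, a, b]
      ring
    · exact ⟨a, a, by simp [braidLetterAct, sigmaAct, hperm, a, b]⟩
  have hk : (k : ℕ) ≠ i ∧ (k : ℕ) ≠ i + 1 := by
    simp only [a, b, Fin.ext_iff] at hka hkb; exact ⟨hka, hkb⟩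
  refine ⟨k, k, ?_⟩
  cases sign <;>
    simp [braidLetterAct, sigmaAct, sigmaInvAct, hperm, Equiv.swap_apply_of_ne_of_ne hka hkb, hk]

theorem braidLetterAct_letterPerm_modEq {m : ℕ} (l : BraidLetter m) {v : Fin m → ℤ} {d : ℤ}
    (hd : ∀ a b, d ∣ v a - v b) (k : Fin m) :
    braidLetterAct l v (letterPerm l.1 k) ≡ v k [ZMOD 2 * d] := by
  obtain ⟨x, y, hxy⟩ := exists_braidLetterAct_letterPerm_eq l v k
  rw [hxy, Int.modEq_comm, Int.modEq_iff_dvd, add_sub_cancel_left]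
  exact mul_dvd_mul_left 2 (hd x y)

theorem dvd_braidLetterAct_sub {m : ℕ} (l : BraidLetter m) {v : Fin m → ℤ} {d : ℤ}
    (hd : ∀ a b, d ∣ v a - v b) (a b : Fin m) :
    d ∣ braidLetterAct l v a - braidLetterAct l v b := by
  have hmod (j : Fin m) : braidLetterAct l v j ≡ v (letterPerm l.1 j) [ZMOD d] := by
    simpa [letterPerm] using
      (braidLetterAct_letterPerm_modEq l hd (letterPerm l.1 j)).of_mul_left 2
  exact Int.ModEq.dvd ((hmod b).trans ((Int.modEq_iff_dvd.mpr (hd _ _)).trans (hmod a).symm))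

theorem braidWordPerm_cons {m : ℕ} (l : BraidLetter m) (β : List (BraidLetter m)) :
    braidWordPerm (l :: β) = braidWordPerm β * letterPerm l.1 := by
  suffices h : ∀ p, β.foldl (fun q l => letterPerm l.1 * q) p = braidWordPerm β * p by
    simpa [braidWordPerm] using h (letterPerm l.1)
  induction β with
  | nil => simp [braidWordPerm]
  | cons l' β ih =>
    intro p
    simp only [braidWordPerm, List.foldl_cons] at ih ⊢
    rw [ih, ih (letterPerm l'.1 * 1), mul_one, mul_assoc]

theorem braidWordAct_braidWordPerm_modEq {m : ℕ} (β : List (BraidLetter m)) {v : Fin m → ℤ}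
    {d : ℤ} (hd : ∀ a b, d ∣ v a - v b) (k : Fin m) :
    braidWordAct β v (braidWordPerm β k) ≡ v k [ZMOD 2 * d] := by
  induction β generalizing v k with
  | nil => rfl
  | cons l β ih =>
    rw [braidWordPerm_cons, Equiv.Perm.mul_apply]
    exact (ih (dvd_braidLetterAct_sub l hd) _).trans (braidLetterAct_letterPerm_modEq l hd k)

theorem stmt_2_general (m : ℕ) (v : Fin m → ℤ) (β : List (BraidLetter m)) :
    ∀ k : Fin m, braidWordAct β v (braidWordPerm β k) ≡ v k [ZMOD 2 * dgcd v] :=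
  braidWordAct_braidWordPerm_modEq β (dgcd_dvd_sub v)

/-- if `w = v·β` for a braid word `β`, then
`b_{π_β(k)} ≡ a_k (mod 2d(v))` for every `k`. -/
theorem stmt_2 (m : ℕ) (hm : 2 ≤ m) (v : Fin m → ℤ) (β : List (BraidLetter m)) :
    ∀ k : Fin m, braidWordAct β v (braidWordPerm β k) ≡ v k [ZMOD 2 * dgcd v] :=
  stmt_2_general m v β
end

section
/- Let v = (a_1,a_2,a_3) ∈ ℤ³ and set |v| = max{a_1,a_2,a_3} − min{a_1,a_2,a_3}. If a_1, a_2, a_3 are pairwise distinct, then there exists w ∈ ℤ³ with v ∼ w and |w| < |v|. -/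
/-! Among three distinct integers one is strictly between the other two, and the entry holding
it is adjacent to an entry holding an extreme value (the middle position is adjacent to both
others). A single move `σ_i^{±1}` on that adjacent pair reflects the extreme value `z` through
the middle value `y`; if `x` is the third value, the new values `x, y, 2y - z` span
`max |y - x| |z - y| < |z - x|`. -/

theorem sigmaAct_sigmaInvAct {m : ℕ} (i : Fin (m - 1)) (v : Fin m → ℤ) :
    sigmaAct i (sigmaInvAct i v) = v := by
  funext j
  simp only [sigmaAct, sigmaInvAct]
  split_ifs <;> try omega
  · exact congrArg v (Fin.ext (by dsimp only; omega))
  · rw [sub_sub_cancel]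
    exact congrArg v (Fin.ext (by dsimp only; omega))

theorem hurwitzEquiv_sigmaAct {m : ℕ} (i : Fin (m - 1)) (v : Fin m → ℤ) :
    HurwitzEquiv v (sigmaAct i v) :=
  Relation.EqvGen.rel _ _ ⟨i, rfl⟩

theorem hurwitzEquiv_sigmaInvAct {m : ℕ} (i : Fin (m - 1)) (v : Fin m → ℤ) :
    HurwitzEquiv v (sigmaInvAct i v) := by
  have h := hurwitzEquiv_sigmaAct i (sigmaInvAct i v)
  rw [sigmaAct_sigmaInvAct] at h
  exact Relation.EqvGen.symm _ _ h

theorem sigmaAct_one (v : Fin 3 → ℤ) : sigmaAct (1 : Fin 2) v = ![v 0, v 2, 2 * v 2 - v 1] := by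
  funext j; fin_cases j <;> simp [sigmaAct]

theorem sigmaInvAct_zero (v : Fin 3 → ℤ) :
    sigmaInvAct (0 : Fin 2) v = ![2 * v 0 - v 1, v 0, v 2] := by
  funext j; fin_cases j <;> simp [sigmaInvAct]

theorem sigmaInvAct_one (v : Fin 3 → ℤ) :
    sigmaInvAct (1 : Fin 2) v = ![v 0, 2 * v 1 - v 2, v 1] := by
  funext j; fin_cases j <;> simp [sigmaInvAct]

/-- if the three entries of `v ∈ ℤ³` are pairwise distinct, then `v`
is Hurwitz equivalent to some `w` with `|w| < |v|`, where `|v| = max − min`. -/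
theorem stmt_3 (v : Fin 3 → ℤ)
    (h01 : v 0 ≠ v 1) (h02 : v 0 ≠ v 2) (h12 : v 1 ≠ v 2) :
    ∃ w : Fin 3 → ℤ, HurwitzEquiv v w ∧
      max (max (w 0) (w 1)) (w 2) - min (min (w 0) (w 1)) (w 2) <
      max (max (v 0) (v 1)) (v 2) - min (min (v 0) (v 1)) (v 2) := by
  have hmiddle : (v 0 < v 1 ∧ v 1 < v 2 ∨ v 2 < v 1 ∧ v 1 < v 0) ∨
      (v 1 < v 0 ∧ v 0 < v 2 ∨ v 2 < v 0 ∧ v 0 < v 1) ∨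
      (v 0 < v 2 ∧ v 2 < v 1 ∨ v 1 < v 2 ∧ v 2 < v 0) := by
    omega
  rcases hmiddle with h1 | h0 | h2
  · refine ⟨_, hurwitzEquiv_sigmaInvAct 1 v, ?_⟩
    simp only [sigmaInvAct_one, Matrix.cons_val_zero, Matrix.cons_val_one, Matrix.cons_val_two,
      Matrix.head_cons, Matrix.tail_cons]
    omega
  · refine ⟨_, hurwitzEquiv_sigmaInvAct 0 v, ?_⟩
    simp only [sigmaInvAct_zero, Matrix.cons_val_zero, Matrix.cons_val_one, Matrix.cons_val_two,
      Matrix.head_cons, Matrix.tail_cons]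
    omega
  · refine ⟨_, hurwitzEquiv_sigmaAct 1 v, ?_⟩
    simp only [sigmaAct_one, Matrix.cons_val_zero, Matrix.cons_val_one, Matrix.cons_val_two,
      Matrix.head_cons, Matrix.tail_cons]
    omega
end

section
/- Every element v ∈ ℤ³ is Hurwitz equivalent to (x, y, y) for some integers x ≤ y. -/
/-!
On the differences `(d₁, d₂) = (b - a, c - b)` of a triple `(a, b, c)`, the moves `σ₁^{±1}` and
`σ₂^{±1}` act by `d₂ ↦ d₂ ∓ d₁` and `d₁ ↦ d₁ ± d₂`. Running Euclid's algorithm on `(d₁, d₂)`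
therefore reaches `d₂ = 0`, i.e. a triple `(x, y, y)`; the sign of `y - x` can then be flipped by
the word `σ₁ σ₂² σ₁`, which sends `(x, y, y)` to `(x, 2x - y, 2x - y)`.
-/

theorem HurwitzEquiv.symm {m : ℕ} {u v : Fin m → ℤ} (h : HurwitzEquiv u v) : HurwitzEquiv v u :=
  Relation.EqvGen.symm _ _ h

theorem HurwitzEquiv.trans {m : ℕ} {u v w : Fin m → ℤ} (h : HurwitzEquiv u v)
    (h' : HurwitzEquiv v w) : HurwitzEquiv u w :=
  Relation.EqvGen.trans _ _ _ h h'

namespace HurwitzEquiv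

variable (a b c : ℤ)

theorem sigma₁ : HurwitzEquiv ![a, b, c] ![b, 2 * b - a, c] :=
  Relation.EqvGen.rel _ _ ⟨0, by funext j; fin_cases j <;> simp [sigmaAct]⟩

theorem sigma₂ : HurwitzEquiv ![a, b, c] ![a, c, 2 * c - b] :=
  Relation.EqvGen.rel _ _ ⟨1, by funext j; fin_cases j <;> simp [sigmaAct]⟩

theorem sigma₁_inv : HurwitzEquiv ![a, b, c] ![2 * a - b, a, c] :=
  (Relation.EqvGen.rel _ _ ⟨0, by funext j; fin_cases j <;> simp [sigmaAct]⟩ :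
    HurwitzEquiv ![2 * a - b, a, c] ![a, b, c]).symm

theorem sigma₂_inv : HurwitzEquiv ![a, b, c] ![a, 2 * b - c, b] :=
  (Relation.EqvGen.rel _ _ ⟨1, by funext j; fin_cases j <;> simp [sigmaAct]⟩ :
    HurwitzEquiv ![a, 2 * b - c, b] ![a, b, c]).symm

end HurwitzEquiv

open HurwitzEquiv

theorem exists_hurwitzEquiv_differences_lt {a b c : ℤ} (hab : a ≠ b) (hbc : b ≠ c) :
    ∃ a' b' c' : ℤ, HurwitzEquiv ![a, b, c] ![a', b', c'] ∧
      (b' - a').natAbs + (c' - b').natAbs < (b - a).natAbs + (c - b).natAbs := by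
  have : (2 * b - a - b).natAbs + (c - (2 * b - a)).natAbs < (b - a).natAbs + (c - b).natAbs ∨
      (c - a).natAbs + (2 * c - b - c).natAbs < (b - a).natAbs + (c - b).natAbs ∨
      (a - (2 * a - b)).natAbs + (c - a).natAbs < (b - a).natAbs + (c - b).natAbs ∨
      (2 * b - c - a).natAbs + (b - (2 * b - c)).natAbs < (b - a).natAbs + (c - b).natAbs := by
    omega
  rcases this with h | h | h | h
  exacts [⟨_, _, _, sigma₁ a b c, h⟩, ⟨_, _, _, sigma₂ a b c, h⟩, ⟨_, _, _, sigma₁_inv a b c, h⟩,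
    ⟨_, _, _, sigma₂_inv a b c, h⟩]

theorem exists_hurwitzEquiv_last_eq (a b c : ℤ) : ∃ x y : ℤ, HurwitzEquiv ![a, b, c] ![x, y, y] := by
  induction hn : (b - a).natAbs + (c - b).natAbs using Nat.strong_induction_on
    generalizing a b c with
  | _ n ih =>
  by_cases hbc : b = c
  · exact ⟨a, b, hbc ▸ Relation.EqvGen.refl _⟩
  by_cases hab : a = b
  · subst hab
    exact ⟨c, 2 * c - a, (sigma₂ a a c).trans (sigma₁ a c (2 * c - a))⟩
  obtain ⟨a', b', c', h, hlt⟩ := exists_hurwitzEquiv_differences_lt hab hbc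
  obtain ⟨x, y, h'⟩ := ih _ (hn ▸ hlt) a' b' c' rfl
  exact ⟨x, y, h.trans h'⟩

theorem hurwitzEquiv_reflect (x y : ℤ) : HurwitzEquiv ![x, y, y] ![x, 2 * x - y, 2 * x - y] :=
  (sigma₁ x y y).trans <| (sigma₂_inv y y x).symm.trans <| (sigma₂ y y x).trans (sigma₁ y x _)

/-- every `v ∈ ℤ³` is Hurwitz equivalent to `(x, y, y)` for some `x ≤ y`. -/
theorem stmt_4 (v : Fin 3 → ℤ) :
    ∃ x y : ℤ, x ≤ y ∧ HurwitzEquiv v ![x, y, y] := by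
  obtain ⟨x, y, h⟩ := exists_hurwitzEquiv_last_eq (v 0) (v 1) (v 2)
  rw [show ![v 0, v 1, v 2] = v by funext j; fin_cases j <;> rfl] at h
  rcases le_total x y with hxy | hyx
  · exact ⟨x, y, hxy, h⟩
  · exact ⟨x, 2 * x - y, by omega, h.trans (hurwitzEquiv_reflect x y)⟩
end

section
/- Let k ≥ 2. Every element v ∈ ℤ^{2k−1} is Hurwitz equivalent to the vector whose first 2p−1 entries equal x and whose remaining 2k−2p entries equal y, for some integers x, y, p with x < y and 1 ≤ p ≤ k. -/
/-!
A Hurwitz move replaces adjacent entries `(a, b)` by `(b, 2b - a)`. Two consequences make a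
repeated pair `w, w` behave like a single token: it passes across any entry,
`(e, w, w) ∼ (w, w, e)`, and it can be reflected in the entry in front of it,
`(h, w, w) ∼ (h, 2h - w, 2h - w)`.

The moves act on the two differences of a triple `(a, b, c)` by the elementary operations
`(D₁, D₂) ↦ (D₁ ± D₂, D₂), (D₁, D₂ ± D₁)`, so the subtractive Euclidean algorithm turns the triple
into some `(x, w, w)`. Hence a vector of odd length is equivalent to one entry `u` followed by
pairs. Reflecting the pairs in `u` and in one another runs a second Euclidean algorithm, on the
distances `|w - u|`, which stops once every pair sits at `u` or at one common value `u + g`.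
Sorting the pairs then gives the normal form.
-/

open List

def HurwitzStep (l l' : List ℤ) : Prop :=
  ∃ (c d : List ℤ) (a b : ℤ), l = c ++ a :: b :: d ∧ l' = c ++ b :: (2 * b - a) :: d

def ListHurwitzEquiv : List ℤ → List ℤ → Prop :=
  Relation.EqvGen HurwitzStep

namespace ListHurwitzEquiv

theorem refl (l : List ℤ) : ListHurwitzEquiv l l :=
  Relation.EqvGen.refl l

theorem symm {l l' : List ℤ} (h : ListHurwitzEquiv l l') : ListHurwitzEquiv l' l :=
  Relation.EqvGen.symm _ _ h

theorem trans {l l' l'' : List ℤ} (h : ListHurwitzEquiv l l') (h' : ListHurwitzEquiv l' l'') :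
    ListHurwitzEquiv l l'' :=
  Relation.EqvGen.trans _ _ _ h h'

theorem step_head {a b c : ℤ} (d : List ℤ) (hc : c = 2 * b - a) :
    ListHurwitzEquiv (a :: b :: d) (b :: c :: d) :=
  Relation.EqvGen.rel _ _ ⟨[], d, a, b, rfl, hc ▸ rfl⟩

theorem cons {l l' : List ℤ} (x : ℤ) (h : ListHurwitzEquiv l l') :
    ListHurwitzEquiv (x :: l) (x :: l') := by
  induction h with
  | rel _ _ h =>
    obtain ⟨c, d, a, b, rfl, rfl⟩ := h
    exact Relation.EqvGen.rel _ _ ⟨x :: c, d, a, b, rfl, rfl⟩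
  | refl => exact refl _
  | symm _ _ _ ih => exact ih.symm
  | trans _ _ _ _ _ ih ih' => exact ih.trans ih'

theorem length_eq {l l' : List ℤ} (h : ListHurwitzEquiv l l') : l.length = l'.length := by
  induction h with
  | rel _ _ h =>
    obtain ⟨c, d, a, b, rfl, rfl⟩ := h
    simp
  | refl => rfl
  | symm _ _ _ ih => exact ih.symm
  | trans _ _ _ _ _ ih ih' => exact ih.trans ih'

theorem pair_jump (e w : ℤ) (d : List ℤ) :
    ListHurwitzEquiv (e :: w :: w :: d) (w :: w :: e :: d) :=
  (step_head (w :: d) rfl).trans ((step_head d (by ring)).cons w)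

theorem pair_reflect (h w : ℤ) (d : List ℤ) :
    ListHurwitzEquiv (h :: w :: w :: d) (h :: (2 * h - w) :: (2 * h - w) :: d) := by
  set z := 2 * h - w
  have hw : w = 2 * h - z := by ring
  -- `(z, z, h) ∼ (z, h, w) ∼ (h, w, w)` since `z = 2h - w`
  have h₁ : ListHurwitzEquiv (z :: z :: h :: d) (h :: w :: w :: d) :=
    ((step_head d hw).cons z).trans (step_head (w :: d) hw)
  exact (pair_jump h z d |>.trans h₁).symm

end ListHurwitzEquiv

open ListHurwitzEquiv

theorem exists_listHurwitzEquiv_cons_pair (a b c : ℤ) (d : List ℤ) :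
    ∃ x w : ℤ, ListHurwitzEquiv (a :: b :: c :: d) (x :: w :: w :: d) := by
  by_cases hcb : c = b
  · exact ⟨a, b, hcb ▸ refl _⟩
  by_cases hba : b = a
  · exact ⟨c, a, hba ▸ (pair_jump c b d).symm⟩
  have hdecr :
      ((2 * b - c) - a).natAbs + (b - (2 * b - c)).natAbs < (b - a).natAbs + (c - b).natAbs ∨
      (c - a).natAbs + ((2 * c - b) - c).natAbs < (b - a).natAbs + (c - b).natAbs ∨
      ((2 * b - a) - b).natAbs + (c - (2 * b - a)).natAbs < (b - a).natAbs + (c - b).natAbs ∨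
      (a - (2 * a - b)).natAbs + (c - a).natAbs < (b - a).natAbs + (c - b).natAbs := by
    omega
  rcases hdecr with h | h | h | h
  · obtain ⟨x, w, hxw⟩ := exists_listHurwitzEquiv_cons_pair a (2 * b - c) b d
    exact ⟨x, w, ((step_head d (by ring)).cons a).symm.trans hxw⟩
  · obtain ⟨x, w, hxw⟩ := exists_listHurwitzEquiv_cons_pair a c (2 * c - b) d
    exact ⟨x, w, ((step_head d rfl).cons a).trans hxw⟩
  · obtain ⟨x, w, hxw⟩ := exists_listHurwitzEquiv_cons_pair b (2 * b - a) c d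
    exact ⟨x, w, (step_head (c :: d) rfl).trans hxw⟩
  · obtain ⟨x, w, hxw⟩ := exists_listHurwitzEquiv_cons_pair (2 * a - b) a c d
    exact ⟨x, w, (step_head (c :: d) (by ring)).symm.trans hxw⟩
termination_by (b - a).natAbs + (c - b).natAbs

def doubled {α : Type*} (P : List α) : List α :=
  P.flatMap fun w => [w, w]

@[simp]
theorem doubled_nil {α : Type*} : doubled ([] : List α) = [] := rfl

@[simp]
theorem doubled_cons {α : Type*} (w : α) (P : List α) :
    doubled (w :: P) = w :: w :: doubled P := rfl

theorem doubled_append {α : Type*} (P Q : List α) :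
    doubled (P ++ Q) = doubled P ++ doubled Q :=
  flatMap_append

theorem doubled_replicate {α : Type*} (n : ℕ) (x : α) :
    doubled (replicate n x) = replicate (2 * n) x := by
  induction n with
  | zero => rfl
  | succ n ih => rw [replicate_succ, doubled_cons, ih, show 2 * (n + 1) = 2 * n + 1 + 1 by ring]; rfl

theorem cons_doubled_replicate_append {α : Type*} (m n : ℕ) (x y : α) :
    x :: doubled (replicate m x ++ replicate n y) = replicate (2 * m + 1) x ++ replicate (2 * n) y := by
  rw [doubled_append, doubled_replicate, doubled_replicate, replicate_succ, cons_append]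

theorem exists_listHurwitzEquiv_cons_doubled :
    ∀ (l : List ℤ) (j : ℕ), l.length = 2 * j + 1 →
      ∃ (u : ℤ) (P : List ℤ), P.length = j ∧ ListHurwitzEquiv l (u :: doubled P)
  | [a], 0, _ => ⟨a, [], rfl, refl _⟩
  | a :: b :: l, j + 1, hl => by
    obtain ⟨u, P, hP, hlP⟩ := exists_listHurwitzEquiv_cons_doubled l j (by simp at hl; omega)
    obtain ⟨x, w, hxw⟩ := exists_listHurwitzEquiv_cons_pair a b u (doubled P)
    exact ⟨x, w :: P, by simp [hP], ((hlP.cons b).cons a).trans hxw⟩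
  | [], _, h | [_], _ + 1, h | _ :: _ :: _, 0, h => by simp at h

def PairEquiv (u : ℤ) (P Q : List ℤ) : Prop :=
  ListHurwitzEquiv (u :: doubled P) (u :: doubled Q)

namespace PairEquiv

variable {u : ℤ} {P Q R : List ℤ}

theorem refl (u : ℤ) (P : List ℤ) : PairEquiv u P P :=
  ListHurwitzEquiv.refl _

theorem trans (h : PairEquiv u P Q) (h' : PairEquiv u Q R) : PairEquiv u P R :=
  ListHurwitzEquiv.trans h h'

theorem cons (w : ℤ) (h : PairEquiv u P Q) : PairEquiv u (w :: P) (w :: Q) :=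
  (pair_jump u w _).trans (((ListHurwitzEquiv.cons w h).cons w).trans (pair_jump u w _).symm)

theorem of_perm (h : P.Perm Q) : PairEquiv u P Q := by
  induction h with
  | nil => exact refl u []
  | cons w _ ih => exact ih.cons w
  | swap x y l => exact (((pair_jump y x _).cons y).trans (pair_jump y x _)).cons u
  | trans _ _ ih ih' => exact ih.trans ih'

theorem reflect_head (u w : ℤ) (P : List ℤ) : PairEquiv u (w :: P) ((2 * u - w) :: P) :=
  pair_reflect u w _

theorem reflect_second (u z w : ℤ) (P : List ℤ) :
    PairEquiv u (z :: w :: P) (z :: (2 * z - w) :: P) :=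
  ((pair_reflect z w _).cons z).cons u

theorem map_abs (u : ℤ) (P : List ℤ) : PairEquiv u P (P.map fun w => u + |w - u|) := by
  induction P with
  | nil => exact refl u []
  | cons w P ih =>
    refine (ih.cons w).trans ?_
    rcases le_or_gt u w with h | h
    · rw [map_cons, abs_of_nonneg (sub_nonneg.2 h), add_sub_cancel]
      exact refl u _
    · rw [map_cons, abs_of_neg (sub_neg.2 h), show u + -(w - u) = 2 * u - w by ring]
      exact reflect_head u w _

end PairEquiv

theorem exists_pairEquiv_closer {u z w : ℤ} (hz : 0 < (z - u).natAbs)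
    (hzw : (z - u).natAbs < (w - u).natAbs) (P : List ℤ) :
    ∃ w', (w' - u).natAbs < (w - u).natAbs ∧ PairEquiv u (z :: w :: P) (z :: w' :: P) := by
  have hdecr : (2 * z - w - u).natAbs < (w - u).natAbs ∨
      (2 * z - (2 * u - w) - u).natAbs < (w - u).natAbs := by
    omega
  rcases hdecr with h | h
  · exact ⟨_, h, PairEquiv.reflect_second u z w P⟩
  · exact ⟨_, h, ((PairEquiv.reflect_head u w P).cons z).trans (PairEquiv.reflect_second u z _ P)⟩

theorem exists_pos_forall_eq_or_eq_add_or_eq_sub {u : ℤ} {P : List ℤ}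
    (h : ∀ z ∈ P, ∀ w ∈ P, 0 < (z - u).natAbs → (w - u).natAbs ≤ (z - u).natAbs) :
    ∃ g > 0, ∀ w ∈ P, w = u ∨ w = u + g ∨ w = u - g := by
  by_cases hall : ∀ w ∈ P, w = u
  · exact ⟨1, one_pos, fun w hw => Or.inl (hall w hw)⟩
  push Not at hall
  obtain ⟨z, hz, hzu⟩ := hall
  refine ⟨(z - u).natAbs, by omega, fun w hw => ?_⟩
  have h₁ := h z hz w hw
  have h₂ := h w hw z hz
  omega

theorem exists_pairEquiv_two_valued (u : ℤ) (P : List ℤ) :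
    ∃ g > 0, ∃ Q : List ℤ, Q.length = P.length ∧ (∀ w ∈ Q, w = u ∨ w = u + g) ∧
      PairEquiv u P Q := by
  by_cases hclose : ∃ z ∈ P, ∃ w ∈ P, 0 < (z - u).natAbs ∧ (z - u).natAbs < (w - u).natAbs
  · obtain ⟨z, hz, w, hw, hz0, hzw⟩ := hclose
    have hwz : w ∈ P.erase z := (mem_erase_of_ne (by omega)).2 hw
    have hperm : P.Perm (z :: w :: (P.erase z).erase w) :=
      (perm_cons_erase hz).trans ((perm_cons_erase hwz).cons z)
    obtain ⟨w', hw', hPw'⟩ := exists_pairEquiv_closer hz0 hzw ((P.erase z).erase w)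
    obtain ⟨g, hg, Q, hQ, hQval, hPQ⟩ :=
      exists_pairEquiv_two_valued u (z :: w' :: (P.erase z).erase w)
    refine ⟨g, hg, Q, ?_, hQval, (PairEquiv.of_perm hperm).trans (hPw'.trans hPQ)⟩
    rw [hQ, hperm.length_eq, length_cons, length_cons, length_cons, length_cons]
  · push Not at hclose
    obtain ⟨g, hg, hP⟩ := exists_pos_forall_eq_or_eq_add_or_eq_sub hclose
    refine ⟨g, hg, P.map fun w => u + |w - u|, length_map _, ?_, PairEquiv.map_abs u P⟩
    simp only [mem_map, forall_exists_index, and_imp, forall_apply_eq_imp_iff₂]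
    intro w hw
    rcases hP w hw with rfl | rfl | rfl <;> simp [abs_of_pos hg]
termination_by (P.map fun w => (w - u).natAbs).sum
decreasing_by
  rw [(hperm.map _).sum_eq]
  simp only [map_cons, sum_cons]
  omega

theorem List.exists_perm_replicate_append_replicate {α : Type*} [DecidableEq α] {x y : α}
    {l : List α} (h : ∀ w ∈ l, w = x ∨ w = y) :
    ∃ m n : ℕ, l.Perm (replicate m x ++ replicate n y) := by
  have hx : l.filter (fun w => w = x) = replicate (l.filter fun w => w = x).length x :=
    eq_replicate_iff.2 ⟨rfl, by simp⟩
  have hy : l.filter (fun w => !decide (w = x)) =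
      replicate (l.filter fun w => !decide (w = x)).length y :=
    eq_replicate_iff.2 ⟨rfl, fun w hw => by
      simp only [mem_filter, Bool.not_eq_true', decide_eq_false_iff_not] at hw
      exact (h w hw.1).resolve_left hw.2⟩
  have hperm := (filter_append_perm (fun w => decide (w = x)) l).symm
  beta_reduce at hperm
  rw [hx, hy] at hperm
  exact ⟨_, _, hperm⟩

theorem exists_listHurwitzEquiv_normal_form (l : List ℤ) (j : ℕ) (hl : l.length = 2 * j + 1) :
    ∃ (u g : ℤ) (m n : ℕ), 0 < g ∧ m + n = j ∧
      ListHurwitzEquiv l (replicate (2 * m + 1) u ++ replicate (2 * n) (u + g)) := by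
  obtain ⟨u, P, hP, hlP⟩ := exists_listHurwitzEquiv_cons_doubled l j hl
  obtain ⟨g, hg, Q, hQ, hQval, hPQ⟩ := exists_pairEquiv_two_valued u P
  obtain ⟨m, n, hperm⟩ := List.exists_perm_replicate_append_replicate hQval
  have hmn : m + n = j := by simpa [hQ, hP] using hperm.length_eq.symm
  refine ⟨u, g, m, n, hg, hmn, ?_⟩
  rw [← cons_doubled_replicate_append]
  exact hlP.trans (hPQ.trans (PairEquiv.of_perm hperm))

theorem getD_append_cons_cons_of_ne {c d : List ℤ} {a b a' b' : ℤ} {j : ℕ}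
    (h₁ : j ≠ c.length) (h₂ : j ≠ c.length + 1) :
    (c ++ a :: b :: d).getD j 0 = (c ++ a' :: b' :: d).getD j 0 := by
  rcases lt_or_ge j c.length with hj | hj
  · rw [getD_append _ _ _ _ hj, getD_append _ _ _ _ hj]
  · obtain ⟨i, rfl⟩ : ∃ i, j = c.length + (i + 2) := ⟨j - c.length - 2, by omega⟩
    rw [getD_append_right _ _ _ _ hj, getD_append_right _ _ _ _ hj, Nat.add_sub_cancel_left]
    rfl

theorem HurwitzStep.exists_sigmaAct_getD {m : ℕ} {l l' : List ℤ} (h : HurwitzStep l l')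
    (hl : l.length = m) :
    ∃ i : Fin (m - 1), (fun j : Fin m => l'.getD j 0) = sigmaAct i fun j => l.getD j 0 := by
  obtain ⟨c, d, a, b, rfl, rfl⟩ := h
  simp only [length_append, length_cons] at hl
  refine ⟨⟨c.length, by omega⟩, funext fun j => ?_⟩
  simp only [sigmaAct]
  split_ifs with h₁ h₂
  · simp [h₁]
  · simp [h₂]
  · exact getD_append_cons_cons_of_ne h₁ h₂

theorem ListHurwitzEquiv.hurwitzEquiv_getD {m : ℕ} {l l' : List ℤ} (h : ListHurwitzEquiv l l')
    (hl : l.length = m) :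
    HurwitzEquiv (fun j : Fin m => l.getD j 0) (fun j : Fin m => l'.getD j 0) := by
  induction h with
  | rel _ _ h => exact Relation.EqvGen.rel _ _ (h.exists_sigmaAct_getD hl)
  | refl => exact Relation.EqvGen.refl _
  | symm _ _ h ih => exact Relation.EqvGen.symm _ _ (ih ((length_eq h).trans hl))
  | trans _ _ _ h _ ih ih' =>
    exact Relation.EqvGen.trans _ _ _ (ih hl) (ih' ((length_eq h).symm.trans hl))

/-- for `k ≥ 2`, every `v ∈ ℤ^{2k−1}` is Hurwitz equivalent to a vector
with first `2p−1` entries `x` and remaining `2k−2p` entries `y`, for some `x < y`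
and `1 ≤ p ≤ k`. -/
theorem stmt_5 (k : ℕ) (hk : 2 ≤ k) (v : Fin (2 * k - 1) → ℤ) :
    ∃ (x y : ℤ) (p : ℕ), x < y ∧ 1 ≤ p ∧ p ≤ k ∧
      HurwitzEquiv v (fun j => if (j : ℕ) < 2 * p - 1 then x else y) := by
  obtain ⟨u, g, m, n, hg, hmn, h⟩ :=
    exists_listHurwitzEquiv_normal_form (ofFn v) (k - 1) (by simp; omega)
  refine ⟨u, u + g, m + 1, by omega, by omega, by omega, ?_⟩
  convert h.hurwitzEquiv_getD (length_ofFn) using 1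
  · funext j
    simp
  · funext j
    split_ifs with hj
    · rw [getD_append _ _ _ _ (by simp; omega), getD_replicate _ (by omega)]
    · rw [getD_append_right _ _ _ _ (by simp; omega), getD_replicate _ (by simp; omega)]
end

section
/- For all integers x, λ, d, n with d > 0, the elements (x, x+λd, x+d) and (x, x+(λ+2n)d, x+d) of ℤ³ are virtual-pure-braid equivalent: (x, x+λd, x+d) ∼_{vP} (x, x+(λ+2n)d, x+d). -/
/-!
Moving the middle entry `b` of `(a, b, c)` past `a` with `σ₁⁻¹`, swapping back with `τ₁`, then
past `c` with `σ₂` and swapping back with `τ₂` gives `(a, b + 2 (c - a), c)`, and the underlying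
permutation `(1 2)(1 2)(2 3)(2 3)` is trivial. Iterating this word or its inverse adds
any even multiple of `c - a` to `b`, and for `(x, x + λd, x + d)` that multiple is `2nd`.
-/

section VPureEquiv

variable {m : ℕ}

theorem vwordAct_append (β γ : List (VBraidLetter m)) (v : Fin m → ℤ) :
    vwordAct (β ++ γ) v = vwordAct γ (vwordAct β v) :=
  List.foldl_append

theorem foldl_letterPerm_eq_vwordPerm_mul (β : List (VBraidLetter m)) (p : Equiv.Perm (Fin m)) :
    β.foldl (fun q l => letterPerm l.1 * q) p = vwordPerm β * p := by
  induction β generalizing p with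
  | nil => simp [vwordPerm]
  | cons l β ih =>
    simp only [vwordPerm, List.foldl_cons, mul_one]
    rw [ih, ih (letterPerm l.1), mul_assoc]

theorem vwordPerm_append (β γ : List (VBraidLetter m)) :
    vwordPerm (β ++ γ) = vwordPerm γ * vwordPerm β := by
  rw [vwordPerm, List.foldl_append, ← vwordPerm, foldl_letterPerm_eq_vwordPerm_mul]

theorem VPureEquiv.refl (v : Fin m → ℤ) : VPureEquiv v v :=
  ⟨[], rfl, rfl⟩

theorem VPureEquiv.trans {u v w : Fin m → ℤ} (huv : VPureEquiv u v) (hvw : VPureEquiv v w) :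
    VPureEquiv u w := by
  obtain ⟨β, rfl, hβ⟩ := huv
  obtain ⟨γ, rfl, hγ⟩ := hvw
  exact ⟨β ++ γ, vwordAct_append β γ u, by rw [vwordPerm_append, hβ, hγ, mul_one]⟩

end VPureEquiv

theorem vpureEquiv_add_two_mul_sub (a b c : ℤ) :
    VPureEquiv ![a, b, c] ![a, b + 2 * (c - a), c] := by
  refine ⟨[(0, some false), (0, none), (1, some true), (1, none)], ?_, by decide⟩
  funext j
  fin_cases j <;> simp [vwordAct, vletterAct, sigmaAct, sigmaInvAct, tauAct]
  ring

theorem vpureEquiv_sub_two_mul_sub (a b c : ℤ) :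
    VPureEquiv ![a, b, c] ![a, b - 2 * (c - a), c] := by
  refine ⟨[(1, none), (1, some false), (0, none), (0, some true)], ?_, by decide⟩
  funext j
  fin_cases j <;> simp [vwordAct, vletterAct, sigmaAct, sigmaInvAct, tauAct]
  ring

theorem vpureEquiv_add_two_mul_mul_sub (a b c k : ℤ) :
    VPureEquiv ![a, b, c] ![a, b + 2 * k * (c - a), c] := by
  induction k using Int.induction_on with
  | zero => simpa using VPureEquiv.refl _
  | succ k ih =>
    refine ih.trans ?_
    convert vpureEquiv_add_two_mul_sub a (b + 2 * k * (c - a)) c using 3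
    ring
  | pred k ih =>
    refine ih.trans ?_
    convert vpureEquiv_sub_two_mul_sub a (b + 2 * -k * (c - a)) c using 3
    ring

theorem stmt_16_general (x lam d n : ℤ) :
    VPureEquiv ![x, x + lam * d, x + d] ![x, x + (lam + 2 * n) * d, x + d] := by
  convert vpureEquiv_add_two_mul_mul_sub x (x + lam * d) (x + d) n using 3
  ring

/-- `(x, x+λd, x+d) ∼_{vP} (x, x+(λ+2n)d, x+d)` for all `x, λ, n` and `d > 0`. -/
theorem stmt_16 (x lam d n : ℤ) (hd : 0 < d) :
    VPureEquiv ![x, x + lam * d, x + d] ![x, x + (lam + 2 * n) * d, x + d] :=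
  stmt_16_general x lam d n
end
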